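/- arXiv:2402.08111 — 2 statements merged into one kernel-verified Lean document; each statement's English description precedes it below -/
import Mathlib

section
/- Let φ, A₁, A₂, B, B⋆ : ℝ → ℝ with φ differentiable and φ(t) ≠ 0 for every t, and suppose that for all t: φ′(t) = (A₂(t) − (sinh(2φ(t))·A₁(t) + cosh(2φ(t))·A₂(t)))/2 − (B(t) − (cosh(2φ(t))·B(t) + sinh(2φ(t))·B⋆(t))). Then the function T = coth ∘ φ is differentiable and satisfies T′(t) = T(t)·(A₁(t) − 2B⋆(t)) + (A₂(t) − 2B(t)) for all t. -/
/-- The hyperbolic cotangent. -/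
noncomputable def coth (x : ℝ) : ℝ := Real.cosh x / Real.sinh x

/-- Passage from equations (27), (29), (35) to equation (36) along a curve: if the
hyperbolic angle `φ` satisfies
`2φ′ = (α² − ᾱ²) − 2(β − β̄)` with `ᾱ² = sinh(2φ)α¹ + cosh(2φ)α²` and
`β̄ = cosh(2φ)β + sinh(2φ)⋆β`, then `T = coth ∘ φ` satisfies
`T′ = T(α¹ − 2⋆β) + (α² − 2β)`. -/
theorem deriv_coth_comp_of_deformation_angle
    (φ A₁ A₂ B Bs : ℝ → ℝ) (hφ : Differentiable ℝ φ) (hφ0 : ∀ t, φ t ≠ 0)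
    (hderiv : ∀ t, deriv φ t =
      (A₂ t - (Real.sinh (2 * φ t) * A₁ t + Real.cosh (2 * φ t) * A₂ t)) / 2
        - (B t - (Real.cosh (2 * φ t) * B t + Real.sinh (2 * φ t) * Bs t))) :
    Differentiable ℝ (coth ∘ φ) ∧
      ∀ t, deriv (coth ∘ φ) t =
        (coth ∘ φ) t * (A₁ t - 2 * Bs t) + (A₂ t - 2 * B t) := by
  have key : ∀ t, HasDerivAt (coth ∘ φ)
      ((coth ∘ φ) t * (A₁ t - 2 * Bs t) + (A₂ t - 2 * B t)) t := by
    intro t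
    have hs : Real.sinh (φ t) ≠ 0 := Real.sinh_ne_zero.mpr (hφ0 t)
    have hφt := (hφ t).hasDerivAt
    have hdiv := (hφt.cosh).div (hφt.sinh) hs
    have heq : (Real.sinh (φ t) * deriv φ t * Real.sinh (φ t) -
        Real.cosh (φ t) * (Real.cosh (φ t) * deriv φ t)) / Real.sinh (φ t) ^ 2 =
        (coth ∘ φ) t * (A₁ t - 2 * Bs t) + (A₂ t - 2 * B t) := by
      have hcs : Real.cosh (φ t) ^ 2 = Real.sinh (φ t) ^ 2 + 1 := Real.cosh_sq _
      have hnum : Real.sinh (φ t) * deriv φ t * Real.sinh (φ t) -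
          Real.cosh (φ t) * (Real.cosh (φ t) * deriv φ t) = -deriv φ t := by
        linear_combination (-(deriv φ t)) * hcs
      rw [hnum, hderiv t, Real.cosh_two_mul, Real.sinh_two_mul, Real.cosh_sq]
      simp only [Function.comp, coth]
      field_simp
      ring
    rw [heq] at hdiv
    exact hdiv.congr_deriv rfl |>.congr_of_eventuallyEq (by
      filter_upwards with x; simp [coth, Function.comp])
  exact ⟨fun t => (key t).differentiableAt, fun t => (key t).deriv⟩
end

section
/- Let U ⊆ ℝ² be a connected open set, let a₁, a₂, b₁, b₂ : U → ℝ be continuously differentiable, and let T, S : U → ℝ be twice continuously differentiable functions each satisfying the system ∂F/∂x = F·a₁ + b₁ and ∂F/∂y = F·a₂ + b₂ on U. If p ∈ U is a point with T(p) ≠ S(p), then at p one has ∂a₁/∂y = ∂a₂/∂x and ∂b₁/∂y − ∂b₂/∂x + a₁·b₂ − a₂·b₁ = 0. -/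
/-!
Differentiating `∂F/∂x = F a₁ + b₁` in `y` and `∂F/∂y = F a₂ + b₂` in `x`, substituting the
system back for the first derivatives and using the symmetry of the second derivative of `F`,
every solution satisfies `F · (∂a₁/∂y - ∂a₂/∂x) + (∂b₁/∂y - ∂b₂/∂x + a₁ b₂ - a₂ b₁) = 0` at `p`.
This identity is affine in the value `F(p)`, so two solutions with different values at `p`
force both coefficients to vanish.
-/

open Filter Topology

/-- Partial derivative in the first coordinate direction. -/
noncomputable def pdx (f : ℝ × ℝ → ℝ) (p : ℝ × ℝ) : ℝ := fderiv ℝ f p (1, 0)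

/-- Partial derivative in the second coordinate direction. -/
noncomputable def pdy (f : ℝ × ℝ → ℝ) (p : ℝ × ℝ) : ℝ := fderiv ℝ f p (0, 1)

section DirectionalDerivatives

variable {E : Type*} [NormedAddCommGroup E] [NormedSpace ℝ E]

theorem fderiv_fderiv_apply_comm {F : Type*} [NormedAddCommGroup F] [NormedSpace ℝ F]
    {f : E → F} {x : E} (hf : ContDiffAt ℝ 2 f x) (v w : E) :
    fderiv ℝ (fun y => fderiv ℝ f y v) x w = fderiv ℝ (fun y => fderiv ℝ f y w) x v := by
  -- the Lie bracket of two constant vector fields vanishes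
  have h := VectorField.fderiv_apply_lieBracket (V := fun _ => w) (W := fun _ => v) hf
    (by simp [minSmoothness_of_isRCLikeNormedField])
    (differentiableAt_const v) (differentiableAt_const w)
  simpa [VectorField.lieBracket_eq, sub_eq_zero] using h.symm

theorem fderiv_mul_add_apply {f a b : E → ℝ} {x : E} (hf : DifferentiableAt ℝ f x)
    (ha : DifferentiableAt ℝ a x) (hb : DifferentiableAt ℝ b x) (v : E) :
    fderiv ℝ (fun y => f y * a y + b y) x v
      = fderiv ℝ f x v * a x + f x * fderiv ℝ a x v + fderiv ℝ b x v := by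
  rw [fderiv_fun_add (f := fun y => f y * a y) (hf.mul ha) hb, fderiv_fun_mul hf ha]
  simp only [add_apply, smul_apply, smul_eq_mul]
  ring

end DirectionalDerivatives

theorem pdy_pdx_eq_pdx_pdy {f : ℝ × ℝ → ℝ} {p : ℝ × ℝ} (hf : ContDiffAt ℝ 2 f p) :
    pdy (pdx f) p = pdx (pdy f) p :=
  fderiv_fderiv_apply_comm hf _ _

theorem integrability_identity_of_solution {F a₁ a₂ b₁ b₂ : ℝ × ℝ → ℝ} {p : ℝ × ℝ}
    (hF : ContDiffAt ℝ 2 F p)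
    (ha₁ : DifferentiableAt ℝ a₁ p) (ha₂ : DifferentiableAt ℝ a₂ p)
    (hb₁ : DifferentiableAt ℝ b₁ p) (hb₂ : DifferentiableAt ℝ b₂ p)
    (hFx : pdx F =ᶠ[𝓝 p] fun q => F q * a₁ q + b₁ q)
    (hFy : pdy F =ᶠ[𝓝 p] fun q => F q * a₂ q + b₂ q) :
    F p * (pdy a₁ p - pdx a₂ p) + (pdy b₁ p - pdx b₂ p + a₁ p * b₂ p - a₂ p * b₁ p) = 0 := by
  have hFd : DifferentiableAt ℝ F p := hF.differentiableAt two_ne_zero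
  have hyx : pdy (pdx F) p = pdy F p * a₁ p + F p * pdy a₁ p + pdy b₁ p := by
    rw [pdy, hFx.fderiv_eq]
    exact fderiv_mul_add_apply hFd ha₁ hb₁ _
  have hxy : pdx (pdy F) p = pdx F p * a₂ p + F p * pdx a₂ p + pdx b₂ p := by
    rw [pdx, hFy.fderiv_eq]
    exact fderiv_mul_add_apply hFd ha₂ hb₂ _
  have hsymm := pdy_pdx_eq_pdx_pdy hF
  rw [hyx, hxy, hFx.eq_of_nhds, hFy.eq_of_nhds] at hsymm
  linear_combination hsymm

theorem eq_zero_and_eq_zero_of_mul_add_eq_zero {R : Type*} [Ring R] [NoZeroDivisors R]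
    {s t x y : R} (hst : s ≠ t) (hs : s * x + y = 0) (ht : t * x + y = 0) :
    x = 0 ∧ y = 0 := by
  have hdiff : (s - t) * x = 0 := by
    rw [sub_mul, sub_eq_zero]
    exact add_right_cancel (hs.trans ht.symm)
  have hx : x = 0 := (mul_eq_zero.mp hdiff).resolve_left (sub_ne_zero.mpr hst)
  exact ⟨hx, by simpa [hx] using hs⟩

theorem integrability_conditions_of_two_solutions_general
    (U : Set (ℝ × ℝ)) (hU : IsOpen U)
    (a₁ a₂ b₁ b₂ : ℝ × ℝ → ℝ)
    (ha₁ : ContDiffOn ℝ 1 a₁ U) (ha₂ : ContDiffOn ℝ 1 a₂ U)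
    (hb₁ : ContDiffOn ℝ 1 b₁ U) (hb₂ : ContDiffOn ℝ 1 b₂ U)
    (T S : ℝ × ℝ → ℝ) (hT : ContDiffOn ℝ 2 T U) (hS : ContDiffOn ℝ 2 S U)
    (hTx : ∀ p ∈ U, pdx T p = T p * a₁ p + b₁ p)
    (hTy : ∀ p ∈ U, pdy T p = T p * a₂ p + b₂ p)
    (hSx : ∀ p ∈ U, pdx S p = S p * a₁ p + b₁ p)
    (hSy : ∀ p ∈ U, pdy S p = S p * a₂ p + b₂ p)
    (p : ℝ × ℝ) (hp : p ∈ U) (hTS : T p ≠ S p) :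
    pdy a₁ p = pdx a₂ p ∧
      pdy b₁ p - pdx b₂ p + a₁ p * b₂ p - a₂ p * b₁ p = 0 := by
  have hUp : U ∈ 𝓝 p := hU.mem_nhds hp
  have hdiff {f : ℝ × ℝ → ℝ} (hf : ContDiffOn ℝ 1 f U) : DifferentiableAt ℝ f p :=
    (hf.differentiableOn one_ne_zero).differentiableAt hUp
  have identity {F : ℝ × ℝ → ℝ} (hF : ContDiffOn ℝ 2 F U)
      (hFx : ∀ q ∈ U, pdx F q = F q * a₁ q + b₁ q)
      (hFy : ∀ q ∈ U, pdy F q = F q * a₂ q + b₂ q) :=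
    integrability_identity_of_solution (hF.contDiffAt hUp) (hdiff ha₁) (hdiff ha₂)
      (hdiff hb₁) (hdiff hb₂) (eventually_of_mem hUp hFx) (eventually_of_mem hUp hFy)
  obtain ⟨ha, hb⟩ :=
    eq_zero_and_eq_zero_of_mul_add_eq_zero hTS (identity hT hTx hTy) (identity hS hSx hSy)
  exact ⟨sub_eq_zero.mp ha, hb⟩

/-- Necessity in the integrability criterion of Theorem 3.5: if the total differential
system `∂F/∂x = F a₁ + b₁`, `∂F/∂y = F a₂ + b₂` admits two solutions `T`, `S` with
`T(p) ≠ S(p)` at some point `p` of a connected open set `U`, then at `p` the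
integrability conditions `dγ¹ = 0` and `dγ² = γ¹ ∧ γ²` hold. -/
theorem integrability_conditions_of_two_solutions
    (U : Set (ℝ × ℝ)) (hU : IsOpen U) (hUconn : IsConnected U)
    (a₁ a₂ b₁ b₂ : ℝ × ℝ → ℝ)
    (ha₁ : ContDiffOn ℝ 1 a₁ U) (ha₂ : ContDiffOn ℝ 1 a₂ U)
    (hb₁ : ContDiffOn ℝ 1 b₁ U) (hb₂ : ContDiffOn ℝ 1 b₂ U)
    (T S : ℝ × ℝ → ℝ) (hT : ContDiffOn ℝ 2 T U) (hS : ContDiffOn ℝ 2 S U)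
    (hTx : ∀ p ∈ U, pdx T p = T p * a₁ p + b₁ p)
    (hTy : ∀ p ∈ U, pdy T p = T p * a₂ p + b₂ p)
    (hSx : ∀ p ∈ U, pdx S p = S p * a₁ p + b₁ p)
    (hSy : ∀ p ∈ U, pdy S p = S p * a₂ p + b₂ p)
    (p : ℝ × ℝ) (hp : p ∈ U) (hTS : T p ≠ S p) :
    pdy a₁ p = pdx a₂ p ∧
      pdy b₁ p - pdx b₂ p + a₁ p * b₂ p - a₂ p * b₁ p = 0 :=
  integrability_conditions_of_two_solutions_general U hU a₁ a₂ b₁ b₂ ha₁ ha₂ hb₁ hb₂ T S hT hS hTx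
    hTy hSx hSy p hp hTS
end
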